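/- Let Q be a locally finite quiver and C a reduced cycle in Q. Then σ(C) = 1 (C has exactly one source) if and only if some cyclic rotation of C has the form p q⁻¹ where p and q are nontrivial (directed) paths from a common vertex a to a common vertex b; i.e., C forms a contour. -/

import Mathlib

namespace BQ

/-- A quiver: vertices, arrows, start and end maps. -/
structure Quiv where
  V : Type
  A : Type
  s : A → V
  t : A → V

/-- A letter of a walk: an arrow traversed forwards, or a formal inverse. -/
inductive Letter (Q : Quiv) : Type
  | fwd : Q.A → Letter Q
  | bwd : Q.A → Letter Q

variable {Q : Quiv}

def Letter.src : Letter Q → Q.V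
  | .fwd a => Q.s a
  | .bwd a => Q.t a

def Letter.tgt : Letter Q → Q.V
  | .fwd a => Q.t a
  | .bwd a => Q.s a

def Letter.inv : Letter Q → Letter Q
  | .fwd a => .bwd a
  | .bwd a => .fwd a

def Letter.isFwd : Letter Q → Bool
  | .fwd _ => true
  | .bwd _ => false

/-- `IsWalk Q w x y` : the list of letters `w` is a composable walk from `x` to `y`. -/
def IsWalk (Q : Quiv) (w : List (Letter Q)) (x y : Q.V) : Prop :=
  List.Chain' (fun c d => c.tgt = d.src) w ∧
  (match w with
   | [] => x = y
   | c :: _ => c.src = x) ∧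
  (match w.getLast? with
   | none => x = y
   | some c => c.tgt = y)

/-- Formal inverse of a walk. -/
def wInv (Q : Quiv) (w : List (Letter Q)) : List (Letter Q) := (w.map Letter.inv).reverse

/-- The walk associated to a directed path (a list of arrows). -/
def pW (Q : Quiv) (p : List Q.A) : List (Letter Q) := p.map Letter.fwd

/-- `p` is a directed path from `x` to `y`. -/
def IsDirPath (Q : Quiv) (p : List Q.A) (x y : Q.V) : Prop := IsWalk Q (pW Q p) x y

/-- `Q` has no (nontrivial) oriented cycles. -/
def Triangular (Q : Quiv) : Prop := ∀ (p : List Q.A) (x : Q.V), IsDirPath Q p x x → p = []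

/-- `w` is a (nontrivial closed) cycle at `x`. -/
def IsCycleAt (Q : Quiv) (w : List (Letter Q)) (x : Q.V) : Prop := w ≠ [] ∧ IsWalk Q w x x

/-- cyclic successor index -/
def nextIdx {n : ℕ} (i : Fin n) : Fin n := ⟨(i.1 + 1) % n, Nat.mod_lt _ i.pos⟩

/-- index `i` is a source position of the cyclically-read walk `w`. -/
def srcIdxB (Q : Quiv) (w : List (Letter Q)) (i : Fin w.length) : Bool :=
  !(w.get i).isFwd && (w.get (nextIdx i)).isFwd

/-- index `i` is a sink position of the cyclically-read walk `w`. -/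
def sinkIdxB (Q : Quiv) (w : List (Letter Q)) (i : Fin w.length) : Bool :=
  (w.get i).isFwd && !(w.get (nextIdx i)).isFwd

/-- `σ(w)`: number of sources of the cycle `w`. -/
def sigmaC (Q : Quiv) (w : List (Letter Q)) : ℕ :=
  ((List.finRange w.length).filter (fun i => srcIdxB Q w i)).length

/-- number of sinks of the cycle `w`. -/
def sinkCount (Q : Quiv) (w : List (Letter Q)) : ℕ :=
  ((List.finRange w.length).filter (fun i => sinkIdxB Q w i)).length

/-- `w` is reduced as a cycle (cyclically no immediate cancellation). -/
def IsReducedCyc (Q : Quiv) (w : List (Letter Q)) : Prop :=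
  ∀ i : Fin w.length, w.get (nextIdx i) ≠ (w.get i).inv

/-- `w` is reduced as a walk. -/
def IsReducedWalk (Q : Quiv) (w : List (Letter Q)) : Prop :=
  List.Chain' (fun c d => d ≠ c.inv) w

/-- `v` is a source of the cycle `w`. -/
def IsSourceOf (Q : Quiv) (w : List (Letter Q)) (v : Q.V) : Prop :=
  ∃ i : Fin w.length, srcIdxB Q w i = true ∧ (w.get i).tgt = v

/-- `v` is a sink of the cycle `w`. -/
def IsSinkOf (Q : Quiv) (w : List (Letter Q)) (v : Q.V) : Prop :=
  ∃ i : Fin w.length, sinkIdxB Q w i = true ∧ (w.get i).tgt = v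

/-- the cycle `w` is simple: its vertices are pairwise distinct. -/
def IsSimple (Q : Quiv) (w : List (Letter Q)) : Prop :=
  Function.Injective (fun i : Fin w.length => (w.get i).tgt)

/-- `n`-fold repetition of a walk. -/
def repW {α : Type} (n : ℕ) (w : List α) : List α := (List.replicate n w).flatten

/-- Linear combinations of paths with coefficients in `k`. -/
abbrev Lin (Q : Quiv) (k : Type) [Semiring k] := (List Q.A) →₀ k

/-- `ρ` is a minimal relation of the bound quiver `(Q, I)` from `x` to `y`. -/
def MinRel (Q : Quiv) (k : Type) [Field k] (I : Set (Lin Q k)) (ρ : Lin Q k) (x y : Q.V) :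
    Prop :=
  ρ ∈ I ∧ 2 ≤ ρ.support.card ∧
  (∀ p ∈ ρ.support, IsDirPath Q p x y ∧ 2 ≤ p.length) ∧
  ∀ J : Finset (List Q.A), J ⊂ ρ.support → J.Nonempty →
    (J.sum fun p => Finsupp.single p (ρ p)) ∉ I

/-- One elementary step of natural homotopy. -/
inductive NatStep (Q : Quiv) (k : Type) [Field k] (I : Set (Lin Q k)) :
    List Q.A → List Q.A → Prop
  | mk (u w v₁ v₂ : List Q.A) (ρ : Lin Q k) (x y : Q.V)
      (hmin : MinRel Q k I ρ x y) (h₁ : v₁ ∈ ρ.support) (h₂ : v₂ ∈ ρ.support)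
      (hn₁ : v₁ ≠ []) (hn₂ : v₂ ≠ []) :
      NatStep Q k I (u ++ v₁ ++ w) (u ++ v₂ ++ w)

/-- Natural homotopy of paths. -/
def NatHomotopic (Q : Quiv) (k : Type) [Field k] (I : Set (Lin Q k)) :
    List Q.A → List Q.A → Prop :=
  Relation.ReflTransGen (NatStep Q k I)

/-- The homotopy relation `∼` of the bound quiver `(Q, I)`, as the smallest
equivalence relation cancelling `αα⁻¹`, identifying paths of a minimal relation,
and compatible with concatenation. -/
inductive Homotopic (Q : Quiv) (k : Type) [Field k] (I : Set (Lin Q k)) :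
    List (Letter Q) → List (Letter Q) → Prop
  | cancel_fb (a : Q.A) : Homotopic Q k I [.fwd a, .bwd a] []
  | cancel_bf (a : Q.A) : Homotopic Q k I [.bwd a, .fwd a] []
  | minrel (ρ : Lin Q k) (x y : Q.V) (p q : List Q.A) (h : MinRel Q k I ρ x y)
      (hp : p ∈ ρ.support) (hq : q ∈ ρ.support) : Homotopic Q k I (pW Q p) (pW Q q)
  | refl (w : List (Letter Q)) : Homotopic Q k I w w
  | symm {u v : List (Letter Q)} : Homotopic Q k I u v → Homotopic Q k I v u
  | trans {u v w : List (Letter Q)} :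
      Homotopic Q k I u v → Homotopic Q k I v w → Homotopic Q k I u w
  | comp (w₁ w₂ : List (Letter Q)) {u v : List (Letter Q)} :
      Homotopic Q k I u v → Homotopic Q k I (w₁ ++ u ++ w₂) (w₁ ++ v ++ w₂)

/-- Natural contractibility of reduced cycles (Assem–Liu–Zhang). -/
inductive NatContractible (Q : Quiv) (k : Type) [Field k] (I : Set (Lin Q k)) :
    List (Letter Q) → Prop
  | contour (C : List (Letter Q)) (p q : List Q.A) (x y : Q.V) (m : ℕ)
      (hp : IsDirPath Q p x y) (hq : IsDirPath Q q x y) (hpn : p ≠ []) (hqn : q ≠ [])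
      (hrot : C.rotate m = pW Q p ++ wInv Q (pW Q q))
      (hσ : sigmaC Q C = 1)
      (hnat : NatHomotopic Q k I p q) : NatContractible Q k I C
  | split (C w₁ w₂ : List (Letter Q)) (p : List Q.A) (x y : Q.V)
      (h₁ : IsWalk Q w₁ x y) (h₂ : IsWalk Q w₂ x y) (hp : IsDirPath Q p x y)
      (hC : C = w₁ ++ wInv Q w₂) (hσ : 1 < sigmaC Q C)
      (hσ₁ : sigmaC Q (w₁ ++ wInv Q (pW Q p)) < sigmaC Q C)
      (hσ₂ : sigmaC Q (w₂ ++ wInv Q (pW Q p)) < sigmaC Q C)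
      (hc₁ : NatContractible Q k I (w₁ ++ wInv Q (pW Q p)))
      (hc₂ : NatContractible Q k I (w₂ ++ wInv Q (pW Q p))) : NatContractible Q k I C

/-- A Galois covering of bound quivers, given by the action of a group `G`. -/
structure GaloisCov (k : Type) [Field k] (Qt Q : Quiv)
    (It : Set (Lin Qt k)) (I : Set (Lin Q k)) (G : Type) [Group G] where
  onV : Qt.V → Q.V
  onA : Qt.A → Q.A
  comm_s : ∀ a, Q.s (onA a) = onV (Qt.s a)
  comm_t : ∀ a, Q.t (onA a) = onV (Qt.t a)
  surjV : Function.Surjective onV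
  surjA : Function.Surjective onA
  actV : G → Qt.V → Qt.V
  actA : G → Qt.A → Qt.A
  actV_one : ∀ v, actV 1 v = v
  actV_mul : ∀ g h v, actV (g * h) v = actV g (actV h v)
  actA_one : ∀ a, actA 1 a = a
  actA_mul : ∀ g h a, actA (g * h) a = actA g (actA h a)
  act_s : ∀ g a, Qt.s (actA g a) = actV g (Qt.s a)
  act_t : ∀ g a, Qt.t (actA g a) = actV g (Qt.t a)
  onV_act : ∀ g v, onV (actV g v) = onV v
  onA_act : ∀ g a, onA (actA g a) = onA a
  free : ∀ g v, actV g v = v → g = 1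
  fiberV : ∀ v w, onV v = onV w → ∃ g, actV g v = w
  fiberA : ∀ a b, onA a = onA b → ∃ g, actA g a = b
  mapsIdeal : ∀ ρ ∈ It, Finsupp.mapDomain (List.map onA) ρ ∈ I

/-- The two-sided ideal of the path algebra generated by a set of relations. -/
def genIdeal (k : Type) [Field k] (Q : Quiv) (gens : Set (Lin Q k)) : Set (Lin Q k) :=
  (Submodule.span k
    {x : Lin Q k | ∃ ρ ∈ gens, ∃ u w : List Q.A,
      x = Finsupp.mapDomain (fun p => u ++ p ++ w) ρ} : Set (Lin Q k))

/-- `d(x,y)`: the maximal length of a directed path from `x` to `y`. -/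
noncomputable def qDist (Q : Quiv) (x y : Q.V) : ℕ :=
  sSup {n | ∃ w, IsDirPath Q w x y ∧ w.length = n}

/-! Reading a cycle cyclically, its sources are the consecutive pairs (inverse letter, direct
letter), so `σ` is invariant under rotation. If `σ(C) = 1`, rotate `C` so that its unique source
is the wrap-around pair (last letter, first letter). The remaining source-free word starts with an
arrow and can never switch from inverse letters back to arrows, so it is a nonempty block of arrows
`p` followed by a nonempty block of inverse arrows `q⁻¹`; both blocks run from the
source to the vertex where they meet. Conversely, `p q⁻¹` has only the wrap-around source. -/

namespace Letter

@[simp] lemma src_inv (c : Letter Q) : c.inv.src = c.tgt := by cases c <;> rfl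

@[simp] lemma tgt_inv (c : Letter Q) : c.inv.tgt = c.src := by cases c <;> rfl

@[simp] lemma inv_inv (c : Letter Q) : c.inv.inv = c := by cases c <;> rfl

@[simp] lemma isFwd_inv (c : Letter Q) : c.inv.isFwd = !c.isFwd := by cases c <;> rfl

end Letter

set_option linter.deprecated false in
@[simp] lemma isWalk_nil {x y : Q.V} : IsWalk Q [] x y ↔ x = y := by
  simp [IsWalk, List.Chain']

set_option linter.deprecated false in
@[simp] lemma isWalk_cons {c : Letter Q} {w : List (Letter Q)} {x y : Q.V} :
    IsWalk Q (c :: w) x y ↔ c.src = x ∧ IsWalk Q w c.tgt y := by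
  cases w with
  | nil => simp [IsWalk, List.Chain']
  | cons d w =>
    obtain ⟨e, he⟩ : ∃ e, (d :: w).getLast? = some e :=
      ⟨_, List.getLast?_eq_getLast_of_ne_nil (List.cons_ne_nil d w)⟩
    simp [IsWalk, List.Chain', he]
    tauto

lemma isWalk_append {u v : List (Letter Q)} {x z : Q.V} :
    IsWalk Q (u ++ v) x z ↔ ∃ y, IsWalk Q u x y ∧ IsWalk Q v y z := by
  induction u generalizing x with
  | nil => simp
  | cons c u ih => simp [ih, and_assoc]

@[simp] lemma wInv_nil : wInv Q [] = [] := rfl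

@[simp] lemma wInv_cons (c : Letter Q) (w : List (Letter Q)) :
    wInv Q (c :: w) = wInv Q w ++ [c.inv] := by
  simp [wInv]

lemma wInv_wInv (w : List (Letter Q)) : wInv Q (wInv Q w) = w := by
  simp [wInv, List.map_reverse, Function.comp_def]

lemma isWalk_wInv {w : List (Letter Q)} {x y : Q.V} :
    IsWalk Q (wInv Q w) x y ↔ IsWalk Q w y x := by
  induction w generalizing x y with
  | nil => simp [eq_comm]
  | cons c w ih => simp [isWalk_append, ih, and_comm]

lemma IsWalk.rotate {w : List (Letter Q)} {x : Q.V} (h : IsWalk Q w x x) (m : ℕ) :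
    ∃ y, IsWalk Q (w.rotate m) y y := by
  rw [← List.take_append_drop (m % w.length) w, isWalk_append] at h
  obtain ⟨y, hx, hy⟩ := h
  exact ⟨y, List.rotate_eq_drop_append_take_mod ▸ isWalk_append.2 ⟨x, hy, hx⟩⟩

lemma exists_pW_eq_of_forall_isFwd {u : List (Letter Q)} (h : ∀ c ∈ u, c.isFwd) :
    ∃ p, pW Q p = u := by
  induction u with
  | nil => exact ⟨[], rfl⟩
  | cons c u ih =>
    obtain ⟨p, rfl⟩ := ih fun d hd => h d (List.mem_cons_of_mem c hd)
    cases c with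
    | fwd a => exact ⟨a :: p, rfl⟩
    | bwd a => simp [Letter.isFwd] at h

lemma exists_wInv_pW_eq_of_forall_not_isFwd {u : List (Letter Q)}
    (h : ∀ c ∈ u, c.isFwd = false) : ∃ q, wInv Q (pW Q q) = u := by
  obtain ⟨q, hq⟩ := exists_pW_eq_of_forall_isFwd (u := wInv Q u) (by simpa [wInv] using h)
  exact ⟨q, by rw [hq, wInv_wInv]⟩

section CyclicPairs

variable {α : Type*}

def cyclicPairs (l : List α) : List (α × α) := l.zip (l.rotate 1)

lemma zip_rotate {β : Type*} {l : List α} {l' : List β} (h : l.length = l'.length) (m : ℕ) :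
    (l.zip l').rotate m = (l.rotate m).zip (l'.rotate m) := by
  apply List.ext_getElem (by simp [h])
  intro k _ _
  simp [List.getElem_rotate, h]

lemma cyclicPairs_rotate (l : List α) (m : ℕ) :
    cyclicPairs (l.rotate m) = (cyclicPairs l).rotate m := by
  rw [cyclicPairs, cyclicPairs, zip_rotate (List.length_rotate l 1).symm, List.rotate_rotate,
    List.rotate_rotate, add_comm]

lemma zip_cons_append_singleton (a b : α) (l : List α) :
    (a :: l).zip (l ++ [b]) =
      (a :: l).zip l ++ [((a :: l).getLast (List.cons_ne_nil a l), b)] := by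
  induction l generalizing a with
  | nil => rfl
  | cons c l ih => simp [ih]

lemma cyclicPairs_cons (a : α) (l : List α) :
    cyclicPairs (a :: l) =
      (a :: l).zip l ++ [((a :: l).getLast (List.cons_ne_nil a l), a)] := by
  rw [cyclicPairs, List.rotate_cons_succ, List.rotate_zero, zip_cons_append_singleton]

lemma isChain_iff_forall_mem_zip_tail {R : α → α → Prop} {l : List α} :
    l.IsChain R ↔ ∀ e ∈ l.zip l.tail, R e.1 e.2 := by
  induction l using List.twoStepInduction with
  | nil => simp
  | singleton => simp
  | cons_cons a b l _ ih => simp_all [List.isChain_cons_cons]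

lemma exists_rotate_eq_cons_of_mem_cyclicPairs {l : List α} {e : α × α}
    (he : e ∈ cyclicPairs l) :
    ∃ m a t, l.rotate m = a :: t ∧ ((a :: t).getLast (List.cons_ne_nil a t), a) = e := by
  obtain ⟨s, t, hst⟩ := List.append_of_mem he
  obtain ⟨a, r, har⟩ := List.exists_cons_of_ne_nil (l := l.rotate (s ++ [e]).length) <| by
    rintro h
    simp [List.rotate_eq_nil_iff.1 h, cyclicPairs] at he
  refine ⟨_, a, r, har, Option.some.inj ?_⟩
  have hrot := cyclicPairs_rotate l (s ++ [e]).length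
  rw [show cyclicPairs l = (s ++ [e]) ++ t by simp [hst], List.rotate_append_length_eq, har,
    cyclicPairs_cons] at hrot
  simpa using congrArg List.getLast? hrot

end CyclicPairs

def sourceTurn (e : Letter Q × Letter Q) : Bool := !e.1.isFwd && e.2.isFwd

lemma sigmaC_eq_countP_cyclicPairs (w : List (Letter Q)) :
    sigmaC Q w = (cyclicPairs w).countP sourceTurn := by
  have hpairs : cyclicPairs w =
      (List.finRange w.length).map (fun i => (w.get i, w.get (nextIdx i))) := by
    apply List.ext_getElem (by simp [cyclicPairs])
    intro k _ _
    simp [cyclicPairs, List.getElem_rotate, nextIdx]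
  rw [sigmaC, ← List.countP_eq_length_filter, hpairs, List.countP_map]
  rfl

lemma sigmaC_rotate (w : List (Letter Q)) (m : ℕ) : sigmaC Q (w.rotate m) = sigmaC Q w := by
  rw [sigmaC_eq_countP_cyclicPairs, sigmaC_eq_countP_cyclicPairs, cyclicPairs_rotate,
    (List.rotate_perm _ m).countP_eq]

lemma sigmaC_eq_one_iff_isChain {a : Letter Q} {l : List (Letter Q)}
    (h : sourceTurn ((a :: l).getLast (List.cons_ne_nil a l), a)) :
    sigmaC Q (a :: l) = 1 ↔ (a :: l).IsChain (fun c d => sourceTurn (c, d) = false) := by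
  rw [sigmaC_eq_countP_cyclicPairs, cyclicPairs_cons, List.countP_append, List.countP_singleton,
    if_pos h, isChain_iff_forall_mem_zip_tail, Nat.add_eq_right, List.countP_eq_zero]
  simp

lemma isChain_not_sourceTurn_append {u v : List (Letter Q)} (hu : ∀ c ∈ u, c.isFwd)
    (hv : ∀ c ∈ v, c.isFwd = false) :
    (u ++ v).IsChain (fun c d => sourceTurn (c, d) = false) := by
  refine List.Pairwise.isChain (List.pairwise_append.2 ⟨List.pairwise_of_forall_mem_list ?_,
    List.pairwise_of_forall_mem_list ?_, ?_⟩) <;> intros <;> simp_all [sourceTurn]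

lemma exists_append_of_isChain_not_sourceTurn {l : List (Letter Q)}
    (h : l.IsChain (fun c d => sourceTurn (c, d) = false)) :
    ∃ u v, l = u ++ v ∧ (∀ c ∈ u, c.isFwd) ∧ ∀ c ∈ v, c.isFwd = false := by
  induction l with
  | nil => exact ⟨[], [], rfl, by simp, by simp⟩
  | cons a l ih =>
    cases ha : a.isFwd
    · refine ⟨[], a :: l, rfl, by simp, h.induction _ _ ?_ fun _ => ha⟩
      intro c d hcd hc
      simpa [sourceTurn, hc] using hcd
    · obtain ⟨u, v, rfl, hu, hv⟩ := ih h.tail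
      exact ⟨a :: u, v, rfl, List.forall_mem_cons.2 ⟨ha, hu⟩, hv⟩

lemma sigmaC_pW_append_wInv_pW {p q : List Q.A} (hp : p ≠ []) (hq : q ≠ []) :
    sigmaC Q (pW Q p ++ wInv Q (pW Q q)) = 1 := by
  obtain ⟨a, p, rfl⟩ := List.exists_cons_of_ne_nil hp
  have hfwd : ∀ c ∈ pW Q (a :: p), c.isFwd := by simp [pW, Letter.isFwd]
  have hbwd : ∀ c ∈ wInv Q (pW Q q), c.isFwd = false := by
    simp [wInv, pW, Letter.inv, Letter.isFwd]
  have hne : wInv Q (pW Q q) ≠ [] := by simpa [wInv, pW] using hq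
  change sigmaC Q (Letter.fwd a :: (pW Q p ++ wInv Q (pW Q q))) = 1
  rw [sigmaC_eq_one_iff_isChain]
  · exact isChain_not_sourceTurn_append hfwd hbwd
  · rw [List.getLast_cons (by simp [hne]), List.getLast_append_of_ne_nil (by simp [hne]) hne]
    simp only [sourceTurn, Bool.and_eq_true, Bool.not_eq_true']
    exact ⟨hbwd _ (List.getLast_mem hne), rfl⟩

lemma exists_rotate_eq_append_of_sigmaC_eq_one {w : List (Letter Q)} (h : sigmaC Q w = 1) :
    ∃ m u v, w.rotate m = u ++ v ∧ u ≠ [] ∧ v ≠ [] ∧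
      (∀ c ∈ u, c.isFwd) ∧ ∀ c ∈ v, c.isFwd = false := by
  obtain ⟨e, he, hturn⟩ : ∃ e ∈ cyclicPairs w, sourceTurn e := by
    rw [← List.countP_pos_iff, ← sigmaC_eq_countP_cyclicPairs, h]
    exact Nat.one_pos
  obtain ⟨m, a, l, hrot, rfl⟩ := exists_rotate_eq_cons_of_mem_cyclicPairs he
  have hchain := (sigmaC_eq_one_iff_isChain hturn).1 (hrot ▸ (sigmaC_rotate w m).trans h)
  obtain ⟨u, v, huv, hfwd, hbwd⟩ := exists_append_of_isChain_not_sourceTurn hchain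
  simp only [sourceTurn, Bool.and_eq_true, Bool.not_eq_true'] at hturn
  refine ⟨m, u, v, hrot.trans huv, ?_, ?_, hfwd, hbwd⟩
  · rintro rfl
    rw [List.nil_append] at huv
    subst huv
    simp [hbwd a List.mem_cons_self] at hturn
  · rintro rfl
    rw [List.append_nil] at huv
    subst huv
    simp [hfwd _ (List.getLast_mem _)] at hturn

lemma exists_contour_of_isWalk_append {u v : List (Letter Q)} {a : Q.V}
    (hw : IsWalk Q (u ++ v) a a) (hu : u ≠ []) (hv : v ≠ []) (hfwd : ∀ c ∈ u, c.isFwd)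
    (hbwd : ∀ c ∈ v, c.isFwd = false) :
    ∃ p q b, p ≠ [] ∧ q ≠ [] ∧ IsDirPath Q p a b ∧ IsDirPath Q q a b ∧
      u ++ v = pW Q p ++ wInv Q (pW Q q) := by
  obtain ⟨p, rfl⟩ := exists_pW_eq_of_forall_isFwd hfwd
  obtain ⟨q, rfl⟩ := exists_wInv_pW_eq_of_forall_not_isFwd hbwd
  obtain ⟨b, hp, hq⟩ := isWalk_append.1 hw
  exact ⟨p, q, b, by simpa [pW] using hu, by simpa [pW, wInv] using hv, hp, isWalk_wInv.1 hq,
    rfl⟩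

theorem stmt1_general (Q : Quiv) (w : List (Letter Q)) (x : Q.V)
    (hcyc : IsCycleAt Q w x) :
    sigmaC Q w = 1 ↔ ∃ (m : ℕ) (p q : List Q.A) (a b : Q.V),
      p ≠ [] ∧ q ≠ [] ∧ IsDirPath Q p a b ∧ IsDirPath Q q a b ∧
      w.rotate m = pW Q p ++ wInv Q (pW Q q) := by
  constructor
  · intro hσ
    obtain ⟨m, u, v, hrot, hu, hv, hfwd, hbwd⟩ := exists_rotate_eq_append_of_sigmaC_eq_one hσ
    obtain ⟨a, ha⟩ := hcyc.2.rotate m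
    rw [hrot] at ha
    obtain ⟨p, q, b, hp, hq, hpa, hqa, hpq⟩ :=
      exists_contour_of_isWalk_append ha hu hv hfwd hbwd
    exact ⟨m, p, q, a, b, hp, hq, hpa, hqa, hrot.trans hpq⟩
  · rintro ⟨m, p, q, a, b, hp, hq, -, -, hrot⟩
    rw [← sigmaC_rotate w m, hrot, sigmaC_pW_append_wInv_pW hp hq]

/-- a reduced cycle has exactly one source iff some cyclic rotation of it
has the form `p q⁻¹` with `p`, `q` nontrivial directed paths from `a` to `b`. -/
theorem stmt1 (Q : Quiv) (w : List (Letter Q)) (x : Q.V)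
    (hcyc : IsCycleAt Q w x) (hred : IsReducedCyc Q w) :
    sigmaC Q w = 1 ↔ ∃ (m : ℕ) (p q : List Q.A) (a b : Q.V),
      p ≠ [] ∧ q ≠ [] ∧ IsDirPath Q p a b ∧ IsDirPath Q q a b ∧
      w.rotate m = pW Q p ++ wInv Q (pW Q q) :=
  stmt1_general Q w x hcyc

end BQ
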